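/- arXiv:2510.07216 — 2 statements merged into one kernel-verified Lean document; each statement's English description precedes it below -/
import Mathlib

section
/- Let Q be a real symmetric positive semidefinite d×d matrix and u ∈ ℂ^m with gradient vectors ∇u_i ∈ ℂ^d. Then the pointwise gradient of |u| (defined as |u|^{-1} Re Σ_{i=1}^m (∇u_i) conj(u_i) when u ≠ 0) satisfies (Q ∇|u|, ∇|u|) ≤ Σ_{i=1}^m (Q ∇u_i, ∇u_i). -/
/-!
Write `u_i = α_i + i β_i` and `∇u_i = a_i + i b_i` with real `α_i, β_i, a_i, b_i`, and let
`q(x) = (Qx, x)`. Then `|u| ∇|u| = Σ_i (α_i a_i + β_i b_i)` and `Σ_i (Q∇u_i, ∇u_i) = Σ_i (q(a_i) + q(b_i))`,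
so the claim is `q(Σ_j c_j w_j) ≤ (Σ_j c_j²) Σ_j q(w_j)` for a nonnegative quadratic form `q`.
That inequality follows from Lagrange's identity
`Σ_{j,k} q(c_j w_k - c_k w_j) = 2 ((Σ_j c_j²) Σ_j q(w_j) - q(Σ_j c_j w_j))`.
-/

open Complex Finset

namespace LinearMap.BilinForm

variable {R M ι : Type*} [CommRing R] [AddCommGroup M] [Module R M]
  (B : LinearMap.BilinForm R M) (s : Finset ι) (c : ι → R) (v : ι → M)

theorem apply_sum_smul_sum_smul :
    B (∑ i ∈ s, c i • v i) (∑ i ∈ s, c i • v i) = ∑ i ∈ s, ∑ j ∈ s, c i * c j * B (v i) (v j) := by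
  rw [sum_left]
  simp only [sum_right, map_smul, LinearMap.smul_apply, smul_eq_mul, mul_sum, mul_assoc]

theorem sum_sum_apply_smul_sub_smul_self :
    ∑ i ∈ s, ∑ j ∈ s, B (c i • v j - c j • v i) (c i • v j - c j • v i) =
      2 * ((∑ i ∈ s, c i ^ 2) * ∑ i ∈ s, B (v i) (v i) -
        B (∑ i ∈ s, c i • v i) (∑ i ∈ s, c i • v i)) := by
  have expand : ∀ i j, B (c i • v j - c j • v i) (c i • v j - c j • v i) =
      c i ^ 2 * B (v j) (v j) + c j ^ 2 * B (v i) (v i) -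
        (c j * c i * B (v j) (v i) + c i * c j * B (v i) (v j)) := fun i j => by
    simp only [map_sub, map_smul, LinearMap.sub_apply, LinearMap.smul_apply, smul_eq_mul]
    ring
  simp only [expand, sum_sub_distrib, sum_add_distrib, apply_sum_smul_sum_smul, ← sum_mul_sum]
  rw [sum_comm (f := fun i j => c j * c i * B (v j) (v i)),
    sum_comm (f := fun i j => c j ^ 2 * B (v i) (v i)), ← sum_mul_sum]
  ring

theorem apply_sum_smul_self_le [LinearOrder R] [IsStrictOrderedRing R] (hB : ∀ x, 0 ≤ B x x) :
    B (∑ i ∈ s, c i • v i) (∑ i ∈ s, c i • v i) ≤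
      (∑ i ∈ s, c i ^ 2) * ∑ i ∈ s, B (v i) (v i) := by
  have hsum : 0 ≤ ∑ i ∈ s, ∑ j ∈ s, B (c i • v j - c j • v i) (c i • v j - c j • v i) :=
    sum_nonneg fun i _ => sum_nonneg fun j _ => hB _
  rw [sum_sum_apply_smul_sub_smul_self] at hsum
  linarith

theorem apply_sum_smul_add_smul_self_le [LinearOrder R] [IsStrictOrderedRing R] [Fintype ι]
    (hB : ∀ x, 0 ≤ B x x) (a b : ι → R) (v w : ι → M) :
    B (∑ i, (a i • v i + b i • w i)) (∑ i, (a i • v i + b i • w i)) ≤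
      (∑ i, (a i ^ 2 + b i ^ 2)) * ∑ i, (B (v i) (v i) + B (w i) (w i)) := by
  simpa only [Fintype.sum_sum_type, Sum.elim_inl, Sum.elim_inr, ← sum_add_distrib] using
    apply_sum_smul_self_le B univ (Sum.elim a b) (Sum.elim v w) hB

end LinearMap.BilinForm

namespace Matrix

variable {n : Type*} [Fintype n] [DecidableEq n]

theorem sum_sum_mul_mul_eq_toLinearMap₂' {R : Type*} [CommSemiring R] (Q : Matrix n n R)
    (x y : n → R) : ∑ h, ∑ k, Q h k * x k * y h = toLinearMap₂' R Q y x := by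
  simp only [toLinearMap₂'_apply', dotProduct, mulVec, mul_sum]
  exact sum_congr rfl fun h _ => sum_congr rfl fun k _ => by ring

theorem re_sum_sum_ofReal_mul_mul_conj (Q : Matrix n n ℝ) (z : n → ℂ) :
    (∑ h, ∑ k, (Q h k : ℂ) * z k * starRingEnd ℂ (z h)).re =
      toLinearMap₂' ℝ Q (fun k => (z k).re) (fun k => (z k).re) +
        toLinearMap₂' ℝ Q (fun k => (z k).im) (fun k => (z k).im) := by
  simp only [← sum_sum_mul_mul_eq_toLinearMap₂', ← sum_add_distrib, Complex.re_sum]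
  exact sum_congr rfl fun h _ => sum_congr rfl fun k _ => by simp [Complex.mul_re]

end Matrix

theorem stmt3_general {d m : ℕ} (Q : Matrix (Fin d) (Fin d) ℝ)
    (hpsd : ∀ ξ : Fin d → ℝ, 0 ≤ ∑ h : Fin d, ∑ k : Fin d, Q h k * ξ k * ξ h)
    (u : Fin m → ℂ) (gu : Fin m → Fin d → ℂ) :
    (∑ h : Fin d, ∑ k : Fin d,
        Q h k *
          ((∑ i : Fin m, gu i k * (starRingEnd ℂ) (u i)).re /
              Real.sqrt (∑ i : Fin m, Complex.normSq (u i))) *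
          ((∑ i : Fin m, gu i h * (starRingEnd ℂ) (u i)).re /
              Real.sqrt (∑ i : Fin m, Complex.normSq (u i)))) ≤
      (∑ i : Fin m, ∑ h : Fin d, ∑ k : Fin d,
          (Q h k : ℂ) * gu i k * (starRingEnd ℂ) (gu i h)).re := by
  set B : LinearMap.BilinForm ℝ (Fin d → ℝ) := Matrix.toLinearMap₂' ℝ Q
  have hB : ∀ x, 0 ≤ B x x := fun x => Q.sum_sum_mul_mul_eq_toLinearMap₂' x x ▸ hpsd x
  set N := ∑ i, normSq (u i)
  have hN : 0 ≤ N := sum_nonneg fun i _ => normSq_nonneg _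
  set v : Fin d → ℝ := fun k => (∑ i, gu i k * starRingEnd ℂ (u i)).re
  have hv : v = ∑ i, ((u i).re • (fun k => (gu i k).re) + (u i).im • fun k => (gu i k).im) := by
    ext k
    simp only [v, re_sum, mul_re, conj_re, conj_im, Finset.sum_apply, Pi.add_apply, Pi.smul_apply,
      smul_eq_mul]
    exact sum_congr rfl fun i _ => by ring
  have hLHS : ∑ h, ∑ k, Q h k * (v k / √N) * (v h / √N) = B v v / √N ^ 2 := by
    simp only [B, ← Q.sum_sum_mul_mul_eq_toLinearMap₂', sum_div]
    exact sum_congr rfl fun h _ => sum_congr rfl fun k _ => by ring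
  rw [hLHS, Real.sq_sqrt hN, re_sum]
  simp only [Q.re_sum_sum_ofReal_mul_mul_conj]
  refine div_le_of_le_mul₀ hN (sum_nonneg fun i _ => add_nonneg (hB _) (hB _)) ?_
  rw [hv, mul_comm]
  convert B.apply_sum_smul_add_smul_self_le hB _ _ _ _ using 2
  simp [N, normSq_apply, sq]

/-- For a real symmetric positive semidefinite matrix `Q`, a nonzero `u ∈ ℂ^m` and arbitrary
gradient vectors `∇u_i ∈ ℂ^d`, the gradient `∇|u| = |u|⁻¹ Re Σ_i conj(u_i) ∇u_i` satisfies
`(Q ∇|u|, ∇|u|) ≤ Σ_i (Q ∇u_i, ∇u_i)`. -/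
theorem stmt3 {d m : ℕ} (Q : Matrix (Fin d) (Fin d) ℝ) (hsym : Q.IsSymm)
    (hpsd : ∀ ξ : Fin d → ℝ, 0 ≤ ∑ h : Fin d, ∑ k : Fin d, Q h k * ξ k * ξ h)
    (u : Fin m → ℂ) (hu : u ≠ 0) (gu : Fin m → Fin d → ℂ) :
    (∑ h : Fin d, ∑ k : Fin d,
        Q h k *
          ((∑ i : Fin m, gu i k * (starRingEnd ℂ) (u i)).re /
              Real.sqrt (∑ i : Fin m, Complex.normSq (u i))) *
          ((∑ i : Fin m, gu i h * (starRingEnd ℂ) (u i)).re /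
              Real.sqrt (∑ i : Fin m, Complex.normSq (u i)))) ≤
      (∑ i : Fin m, ∑ h : Fin d, ∑ k : Fin d,
          (Q h k : ℂ) * gu i k * (starRingEnd ℂ) (gu i h)).re :=
  stmt3_general Q hpsd u gu
end

section
/- Let V be a real m×m matrix (not necessarily symmetric) whose symmetric part V_S = (V + Vᵀ)/2 is positive semidefinite, and suppose there exists c₀ > 0 such that |Im(Vξ, ξ)| ≤ c₀ Re(Vξ, ξ) for every ξ ∈ ℂ^m. Then |(Vξ, η)| ≤ (1 + c₀)(V_S ξ, ξ)^{1/2} (V_S η, η)^{1/2} for every ξ, η ∈ ℂ^m. -/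
open Complex

/-- The Hermitian form `(Vξ, η) = Σ_i (Σ_j V_{ij} ξ_j) conj(η_i)` associated with a real
matrix `V`. -/
noncomputable def hermForm {m : ℕ} (V : Matrix (Fin m) (Fin m) ℝ) (ξ η : Fin m → ℂ) : ℂ :=
  ∑ i : Fin m, (∑ j : Fin m, (V i j : ℂ) * ξ j) * (starRingEnd ℂ) (η i)

/-!
Split a sesquilinear form as `B = R + i J` with `R(x, y) = (B(x, y) + conj B(y, x)) / 2` and
`J(x, y) = (B(x, y) - conj B(y, x)) / 2i`, two Hermitian forms with `R(x, x) = Re B(x, x)` and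
`J(x, x) = Im B(x, x)`. A Hermitian form `H` with `|H(x, x)| ≤ c Re B(x, x)` satisfies
`|H(x, y)| ≤ c √(Re B(x, x)) √(Re B(y, y))`: polarization bounds `2 Re H(x, y)` by
`c (Re B(x, x) + Re B(y, y))`, replacing `x` by `t x` makes this a nonnegative quadratic in the
real variable `t`, whose discriminant gives the geometric mean, and a phase rotation of `x` turns
`Re H(x, y)` into `|H(x, y)|`. For `V` the form `Re B(x, x)` is `(V_S x, x)`, and the bounds for
`R` (with `c = 1`) and `J` (with `c = c₀`) add up to the claim.
-/

open ComplexConjugate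

namespace LinearMap

variable {E : Type*} [AddCommGroup E] [Module ℂ E]

lemma apply_add_add_sub_apply_sub_sub (B : E →ₗ[ℂ] E →ₗ⋆[ℂ] ℂ) (x y : E) :
    B (x + y) (x + y) - B (x - y) (x - y) = 2 * (B x y + B y x) := by
  simp only [map_add, map_sub, add_apply, sub_apply]
  ring

lemma re_apply_add_add_add_re_apply_sub_sub (B : E →ₗ[ℂ] E →ₗ⋆[ℂ] ℂ) (x y : E) :
    (B (x + y) (x + y)).re + (B (x - y) (x - y)).re = 2 * ((B x x).re + (B y y).re) := by
  simp only [map_add, map_sub, add_apply, sub_apply, add_re, sub_re]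
  ring

lemma apply_smul_smul (B : E →ₗ[ℂ] E →ₗ⋆[ℂ] ℂ) (c : ℂ) (x y : E) :
    B (c • x) (c • y) = (normSq c : ℂ) * B x y := by
  rw [map_smulₛₗ₂, map_smulₛₗ, RingHom.id_apply, smul_eq_mul, smul_eq_mul, ← mul_assoc,
    mul_conj]

section HermitianBound

variable {H Q : E →ₗ[ℂ] E →ₗ⋆[ℂ] ℂ} (hH : ∀ x y, conj (H x y) = H y x) {c : ℝ}
  (hHQ : ∀ x, ‖H x x‖ ≤ c * (Q x x).re)
include hH hHQ

lemma two_mul_re_apply_le (x y : E) : 2 * (H x y).re ≤ c * ((Q x x).re + (Q y y).re) := by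
  have hpolar : 4 * (H x y).re = (H (x + y) (x + y)).re - (H (x - y) (x - y)).re := by
    rw [← sub_re, apply_add_add_sub_apply_sub_sub, ← hH x y, add_conj, ← ofReal_ofNat,
      ← ofReal_mul, ofReal_re]
    ring
  have hadd := (re_le_norm _).trans (hHQ (x + y))
  have hsub := (neg_le_abs _).trans ((abs_re_le_norm _).trans (hHQ (x - y)))
  have hpar := congrArg (c * ·) (re_apply_add_add_add_re_apply_sub_sub Q x y)
  linarith

variable (hQ : ∀ x, 0 ≤ (Q x x).re) (hc : 0 ≤ c)
include hQ hc

lemma re_apply_le (x y : E) : (H x y).re ≤ c * √(Q x x).re * √(Q y y).re := by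
  have hdisc := discrim_le_zero (a := c * (Q x x).re) (b := -2 * (H x y).re)
    (c := c * (Q y y).re) fun t => by
      have := two_mul_re_apply_le hH hHQ ((t : ℂ) • x) y
      rw [map_smulₛₗ₂, apply_smul_smul, normSq_ofReal] at this
      simp only [RingHom.id_apply, smul_eq_mul, re_ofReal_mul] at this
      nlinarith
  refine le_abs_self _ |>.trans (abs_le_of_sq_le_sq ?_ (by positivity))
  rw [discrim] at hdisc
  rw [mul_pow, mul_pow, Real.sq_sqrt (hQ x), Real.sq_sqrt (hQ y)]
  nlinarith

theorem norm_apply_le_of_norm_apply_self_le (x y : E) :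
    ‖H x y‖ ≤ c * √(Q x x).re * √(Q y y).re := by
  set u := exp (((-arg (H x y) : ℝ) : ℂ) * I)
  have hu : normSq u = 1 := by
    rw [normSq_eq_norm_sq, norm_exp_ofReal_mul_I, one_pow]
  have huH : u * H x y = ‖H x y‖ := by
    conv_lhs => rw [← norm_mul_exp_arg_mul_I (H x y)]
    rw [mul_left_comm, ← exp_add, ← add_mul, ofReal_neg, neg_add_cancel, zero_mul, exp_zero,
      mul_one]
  calc ‖H x y‖ = (H (u • x) y).re := by
        rw [map_smulₛₗ₂, RingHom.id_apply, smul_eq_mul, huH, ofReal_re]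
    _ ≤ c * √(Q (u • x) (u • x)).re * √(Q y y).re := re_apply_le hH hHQ hQ hc _ _
    _ = c * √(Q x x).re * √(Q y y).re := by rw [apply_smul_smul, hu, ofReal_one, one_mul]

end HermitianBound

def conjFlip (B : E →ₗ[ℂ] E →ₗ⋆[ℂ] ℂ) : E →ₗ[ℂ] E →ₗ⋆[ℂ] ℂ :=
  mk₂'ₛₗ (RingHom.id ℂ) (starRingEnd ℂ) (fun x y => conj (B y x))
    (fun x x' y => by simp only [map_add])
    (fun c x y => by simp only [map_smulₛₗ, smul_eq_mul, map_mul, conj_conj, RingHom.id_apply])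
    (fun x y y' => by simp only [map_add, add_apply])
    (fun c x y => by simp only [map_smulₛₗ₂, smul_eq_mul, map_mul, RingHom.id_apply])

@[simp]
lemma conjFlip_apply (B : E →ₗ[ℂ] E →ₗ⋆[ℂ] ℂ) (x y : E) : conjFlip B x y = conj (B y x) := rfl

noncomputable def reForm (B : E →ₗ[ℂ] E →ₗ⋆[ℂ] ℂ) : E →ₗ[ℂ] E →ₗ⋆[ℂ] ℂ :=
  (2⁻¹ : ℂ) • (B + conjFlip B)

noncomputable def imForm (B : E →ₗ[ℂ] E →ₗ⋆[ℂ] ℂ) : E →ₗ[ℂ] E →ₗ⋆[ℂ] ℂ :=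
  (-(2⁻¹ * I)) • (B - conjFlip B)

variable (B : E →ₗ[ℂ] E →ₗ⋆[ℂ] ℂ)

lemma reForm_add_I_mul_imForm (x y : E) : reForm B x y + I * imForm B x y = B x y := by
  simp only [reForm, imForm, add_apply, sub_apply, smul_apply, smul_eq_mul, conjFlip_apply]
  linear_combination (2⁻¹ * conj (B y x) - 2⁻¹ * B x y) * I_mul_I

lemma reForm_apply_self (x : E) : reForm B x x = (B x x).re := by
  simp only [reForm, add_apply, smul_apply, smul_eq_mul, conjFlip_apply, add_conj]
  push_cast
  ring

lemma imForm_apply_self (x : E) : imForm B x x = (B x x).im := by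
  simp only [imForm, sub_apply, smul_apply, smul_eq_mul, conjFlip_apply, sub_conj]
  push_cast
  linear_combination -((B x x).im : ℂ) * I_mul_I

lemma conj_reForm_apply (x y : E) : conj (reForm B x y) = reForm B y x := by
  simp only [reForm, add_apply, smul_apply, smul_eq_mul, conjFlip_apply, map_mul, map_add,
    map_inv₀, map_ofNat, conj_conj]
  ring

lemma conj_imForm_apply (x y : E) : conj (imForm B x y) = imForm B y x := by
  simp only [imForm, sub_apply, smul_apply, smul_eq_mul, conjFlip_apply, map_mul, map_sub,
    map_neg, map_inv₀, map_ofNat, conj_conj, conj_I]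
  ring

variable {B}

theorem norm_apply_le_of_abs_im_apply_self_le (hB : ∀ x, 0 ≤ (B x x).re) {c : ℝ} (hc : 0 ≤ c)
    (hBc : ∀ x, |(B x x).im| ≤ c * (B x x).re) (x y : E) :
    ‖B x y‖ ≤ (1 + c) * √(B x x).re * √(B y y).re := by
  have hRe : ∀ x, ‖reForm B x x‖ ≤ 1 * (B x x).re := fun x => by
    rw [reForm_apply_self, norm_real, Real.norm_of_nonneg (hB x), one_mul]
  have hIm : ∀ x, ‖imForm B x x‖ ≤ c * (B x x).re := fun x => by
    rw [imForm_apply_self, norm_real, Real.norm_eq_abs]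
    exact hBc x
  calc ‖B x y‖ ≤ ‖reForm B x y‖ + ‖imForm B x y‖ := by
        rw [← reForm_add_I_mul_imForm]
        exact (norm_add_le _ _).trans_eq (by rw [norm_mul, norm_I, one_mul])
    _ ≤ 1 * √(B x x).re * √(B y y).re + c * √(B x x).re * √(B y y).re :=
        add_le_add
          (norm_apply_le_of_norm_apply_self_le (conj_reForm_apply B) hRe hB zero_le_one x y)
          (norm_apply_le_of_norm_apply_self_le (conj_imForm_apply B) hIm hB hc x y)
    _ = (1 + c) * √(B x x).re * √(B y y).re := by ring

end LinearMap

section HermForm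

open Matrix

variable {m : ℕ}

noncomputable def hermFormₛₗ (V : Matrix (Fin m) (Fin m) ℝ) :
    (Fin m → ℂ) →ₗ[ℂ] (Fin m → ℂ) →ₗ⋆[ℂ] ℂ :=
  LinearMap.mk₂'ₛₗ (RingHom.id ℂ) (starRingEnd ℂ) (hermForm V)
    (fun ξ ξ' η => by
      simp only [hermForm, Pi.add_apply, mul_add, add_mul, Finset.sum_add_distrib])
    (fun c ξ η => by
      simp only [hermForm, Pi.smul_apply, smul_eq_mul, RingHom.id_apply, Finset.mul_sum,
        Finset.sum_mul]
      exact Finset.sum_congr rfl fun i _ => Finset.sum_congr rfl fun j _ => by ring)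
    (fun ξ η η' => by
      simp only [hermForm, Pi.add_apply, map_add, mul_add, Finset.sum_add_distrib])
    (fun c ξ η => by
      simp only [hermForm, Pi.smul_apply, smul_eq_mul, map_mul, Finset.mul_sum, Finset.sum_mul]
      exact Finset.sum_congr rfl fun i _ => Finset.sum_congr rfl fun j _ => by ring)

lemma re_hermForm_self (A : Matrix (Fin m) (Fin m) ℝ) (ξ : Fin m → ℂ) :
    (hermForm A ξ ξ).re = ∑ i, ∑ j, A i j * (ξ j).re * (ξ i).re +
      ∑ i, ∑ j, A i j * (ξ j).im * (ξ i).im := by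
  simp only [hermForm, Finset.sum_mul, re_sum, ← Finset.sum_add_distrib, mul_re, mul_im,
    conj_re, conj_im, ofReal_re, ofReal_im]
  ring_nf

-- `/ 2` is division by the scalar matrix `2`, i.e. multiplication by its nonsingular inverse.
lemma add_transpose_div_two_apply (A : Matrix (Fin m) (Fin m) ℝ) (i j : Fin m) :
    ((A + Aᵀ) / 2) i j = (A i j + A j i) / 2 := by
  have h : (2 : Matrix (Fin m) (Fin m) ℝ)⁻¹ = diagonal fun _ => 2⁻¹ :=
    inv_eq_right_inv (by rw [← diagonal_ofNat, diagonal_mul_diagonal]; norm_num)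
  rw [div_eq_mul_inv, h, mul_diagonal, Matrix.add_apply, transpose_apply, div_eq_mul_inv]

lemma sum_sum_symmetrize {n : Type*} [Fintype n] (A : Matrix n n ℝ) (x : n → ℝ) :
    ∑ i, ∑ j, (A i j + A j i) / 2 * x j * x i = ∑ i, ∑ j, A i j * x j * x i := by
  have h : ∑ i, ∑ j, A j i * x j * x i = ∑ i, ∑ j, A i j * x j * x i := by
    rw [Finset.sum_comm]
    simp only [mul_right_comm]
  simp only [add_div, add_mul, Finset.sum_add_distrib, div_mul_eq_mul_div, ← Finset.sum_div, h]
  ring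

lemma re_hermForm_add_transpose_div_two_self (V : Matrix (Fin m) (Fin m) ℝ) (ξ : Fin m → ℂ) :
    (hermForm ((V + Vᵀ) / 2) ξ ξ).re = (hermForm V ξ ξ).re := by
  simp only [re_hermForm_self, add_transpose_div_two_apply, sum_sum_symmetrize]

end HermForm

/-- If the symmetric part `V_S = (V + Vᵀ)/2` of the real matrix `V` is positive semidefinite
and `|Im(Vξ, ξ)| ≤ c₀ Re(Vξ, ξ)` for every `ξ ∈ ℂ^m`, then
`|(Vξ, η)| ≤ (1 + c₀)(V_S ξ, ξ)^{1/2} (V_S η, η)^{1/2}`. -/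
theorem stmt4 {m : ℕ} (V : Matrix (Fin m) (Fin m) ℝ) (c₀ : ℝ) (hc₀ : 0 < c₀)
    (hpsd : ∀ ξ : Fin m → ℝ, 0 ≤ ∑ i : Fin m, ∑ j : Fin m, (V i j + V j i) / 2 * ξ j * ξ i)
    (hIm : ∀ ξ : Fin m → ℂ, |(hermForm V ξ ξ).im| ≤ c₀ * (hermForm V ξ ξ).re) :
    ∀ ξ η : Fin m → ℂ,
      ‖hermForm V ξ η‖ ≤
        (1 + c₀) * Real.sqrt ((hermForm ((V + V.transpose) / 2) ξ ξ).re) *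
          Real.sqrt ((hermForm ((V + V.transpose) / 2) η η).re) := by
  have hpos : ∀ ξ, 0 ≤ (hermForm V ξ ξ).re := fun ξ => by
    rw [← re_hermForm_add_transpose_div_two_self, re_hermForm_self]
    simp only [add_transpose_div_two_apply]
    exact add_nonneg (hpsd _) (hpsd _)
  intro ξ η
  rw [re_hermForm_add_transpose_div_two_self, re_hermForm_add_transpose_div_two_self]
  exact LinearMap.norm_apply_le_of_abs_im_apply_self_le (B := hermFormₛₗ V) hpos hc₀.le hIm ξ η
end
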